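/- arXiv:2002.01348 — 3 statements merged into one kernel-verified Lean document; each statement's English description precedes it below -/
import Mathlib

section
/- Suppose 1−ρ ≤ Δ·e^α ≤ 1 with ρ ∈ (0,1), Δ > 0, α ≥ 0. Then ν* = Δe^α/(2Δe^α − 1 + ρ) satisfies 1/(1+ρ) ≤ ν* ≤ 1, and ℓ(ν*) = (1/2)·log((1+ρ)/(2Δe^α + ρ − 1)). -/
/-! Writing `t = Δ e^α` and `s = 2t - 1 + ρ`, the optimal exponent is `ν* = t / s`; it satisfies
`t / ν* = s` and `(1 - ρ) / (2ν* - 1) = s`. After the constant `2πe` cancels, `ℓ(ν)` equals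
`½ log (1 + ρ) - ν log (t / ν) + (ν - ½) log ((1 - ρ) / (2ν - 1))`, so at `ν*` both logarithms
become `log s` and their coefficients add up to `-½`. -/

open Real Set

noncomputable def ell (ρ Δ α ν : ℝ) : ℝ :=
  (1/2) * Real.log ((2*π*Real.exp 1)^2 * (1 - ρ^2)) - ν*α - ν * Real.log (2*π*Real.exp 1*Δ)
    + (ν/2) * Real.log (ν^2/(2*ν - 1))
    - ((1-ν)/2) * Real.log ((2*π*Real.exp 1)^2 * (1-ρ)^2/(2*ν - 1))

noncomputable def nuStar (ρ t : ℝ) : ℝ := t / (2 * t - 1 + ρ)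

section nuStar

variable {ρ t : ℝ}

lemma nuStar_denom_pos (hρ : ρ < 1) (h1 : 1 - ρ ≤ t) : 0 < 2 * t - 1 + ρ := by
  linarith

lemma one_div_one_add_le_nuStar (hρ : ρ ∈ Ioo (-1) 1) (h1 : 1 - ρ ≤ t) (h2 : t ≤ 1) :
    1 / (1 + ρ) ≤ nuStar ρ t := by
  rw [nuStar, div_le_div_iff₀ (by linarith [hρ.1]) (nuStar_denom_pos hρ.2 h1)]
  nlinarith [mul_nonneg (sub_nonneg.2 h2) (sub_nonneg.2 hρ.2.le)]

lemma nuStar_le_one (hρ : ρ < 1) (h1 : 1 - ρ ≤ t) : nuStar ρ t ≤ 1 := by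
  rw [nuStar, div_le_one (nuStar_denom_pos hρ h1)]
  linarith

lemma div_nuStar (hρ : ρ < 1) (h1 : 1 - ρ ≤ t) : t / nuStar ρ t = 2 * t - 1 + ρ := by
  have ht : t ≠ 0 := by linarith
  rw [nuStar, div_div_cancel₀ ht]

lemma two_mul_nuStar_sub_one (hρ : ρ < 1) (h1 : 1 - ρ ≤ t) :
    2 * nuStar ρ t - 1 = (1 - ρ) / (2 * t - 1 + ρ) := by
  have hs := nuStar_denom_pos hρ h1
  rw [nuStar]
  field_simp
  ring

lemma half_lt_nuStar (hρ : ρ < 1) (h1 : 1 - ρ ≤ t) : 1 / 2 < nuStar ρ t := by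
  have h : 0 < 2 * nuStar ρ t - 1 := by
    rw [two_mul_nuStar_sub_one hρ h1]
    exact div_pos (by linarith) (nuStar_denom_pos hρ h1)
  linarith

lemma div_two_mul_nuStar_sub_one (hρ : ρ < 1) (h1 : 1 - ρ ≤ t) :
    (1 - ρ) / (2 * nuStar ρ t - 1) = 2 * t - 1 + ρ := by
  rw [two_mul_nuStar_sub_one hρ h1, div_div_cancel₀ (by linarith)]

end nuStar

lemma ell_eq {ρ Δ α ν : ℝ} (hρ : ρ ∈ Ioo (-1) 1) (hΔ : 0 < Δ) (hν : 1 / 2 < ν) :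
    ell ρ Δ α ν = 1 / 2 * log (1 + ρ) - ν * log (Δ * exp α / ν)
      + (ν - 1 / 2) * log ((1 - ρ) / (2 * ν - 1)) := by
  obtain ⟨hρ₀, hρ₁⟩ := hρ
  have hm : 1 - ρ ≠ 0 := by linarith
  have hp : 1 + ρ ≠ 0 := by linarith
  have hν₀ : ν ≠ 0 := by linarith
  have hd : 2 * ν - 1 ≠ 0 := by linarith
  set c := 2 * π * exp 1
  have hc : c ≠ 0 := by positivity
  rw [ell, show 1 - ρ ^ 2 = (1 - ρ) * (1 + ρ) by ring,
    log_mul (pow_ne_zero 2 hc) (mul_ne_zero hm hp), log_mul hm hp, log_mul hc hΔ.ne',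
    log_div (pow_ne_zero 2 hν₀) hd, log_div (mul_ne_zero (pow_ne_zero 2 hc) (pow_ne_zero 2 hm)) hd,
    log_mul (pow_ne_zero 2 hc) (pow_ne_zero 2 hm), log_div (mul_ne_zero hΔ.ne' (exp_pos α).ne') hν₀,
    log_mul hΔ.ne' (exp_pos α).ne', log_exp, log_div hm hd]
  simp only [log_pow]
  push_cast
  ring

lemma ell_nuStar {ρ Δ α : ℝ} (hρ : ρ ∈ Ioo (-1) 1) (hΔ : 0 < Δ) (h1 : 1 - ρ ≤ Δ * exp α) :
    ell ρ Δ α (nuStar ρ (Δ * exp α))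
      = 1 / 2 * log ((1 + ρ) / (2 * (Δ * exp α) - 1 + ρ)) := by
  rw [ell_eq hρ hΔ (half_lt_nuStar hρ.2 h1), div_nuStar hρ.2 h1,
    div_two_mul_nuStar_sub_one hρ.2 h1,
    log_div (by linarith [hρ.1]) (nuStar_denom_pos hρ.2 h1).ne']
  ring

theorem stmt_2_general (ρ Δ α : ℝ) (hρ : ρ ∈ Set.Ioo (0:ℝ) 1) (hΔ : 0 < Δ)
    (h1 : 1 - ρ ≤ Δ * Real.exp α) (h2 : Δ * Real.exp α ≤ 1) :
    1/(1+ρ) ≤ Δ * Real.exp α / (2*Δ*Real.exp α - 1 + ρ) ∧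
    Δ * Real.exp α / (2*Δ*Real.exp α - 1 + ρ) ≤ 1 ∧
    ell ρ Δ α (Δ * Real.exp α / (2*Δ*Real.exp α - 1 + ρ))
      = (1/2) * Real.log ((1+ρ)/(2*Δ*Real.exp α + ρ - 1)) := by
  have hρ' : ρ ∈ Ioo (-1) 1 := ⟨by linarith [hρ.1], hρ.2⟩
  have hν : Δ * exp α / (2 * Δ * exp α - 1 + ρ) = nuStar ρ (Δ * exp α) := by
    rw [nuStar, mul_assoc]
  have hs : 2 * Δ * exp α + ρ - 1 = 2 * (Δ * exp α) - 1 + ρ := by ring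
  rw [hν, hs]
  exact ⟨one_div_one_add_le_nuStar hρ' h1 h2, nuStar_le_one hρ.2 h1, ell_nuStar hρ' hΔ h1⟩

theorem stmt_2 (ρ Δ α : ℝ) (hρ : ρ ∈ Set.Ioo (0:ℝ) 1) (hΔ : 0 < Δ) (hα : 0 ≤ α)
    (h1 : 1 - ρ ≤ Δ * Real.exp α) (h2 : Δ * Real.exp α ≤ 1) :
    1/(1+ρ) ≤ Δ * Real.exp α / (2*Δ*Real.exp α - 1 + ρ) ∧
    Δ * Real.exp α / (2*Δ*Real.exp α - 1 + ρ) ≤ 1 ∧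
    ell ρ Δ α (Δ * Real.exp α / (2*Δ*Real.exp α - 1 + ρ))
      = (1/2) * Real.log ((1+ρ)/(2*Δ*Real.exp α + ρ - 1)) :=
  stmt_2_general ρ Δ α hρ hΔ h1 h2
end

section
/- Suppose 1−ρ ≤ Δ·e^α ≤ 1 with ρ ∈ (0,1), Δ > 0, α ≥ 0, and let ν* = Δe^α/(2Δe^α − 1 + ρ). Then for all ν with 1/(1+ρ) ≤ ν ≤ 1, ℓ(ν) ≤ ℓ(ν*) = (1/2)·log((1+ρ)/(2Δe^α + ρ − 1)); that is, ν* maximizes ℓ over [1/(1+ρ), 1]. -/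
open Real Set

noncomputable def ellCore (c ν : ℝ) : ℝ :=
  c * ν + ν * log ν - (ν - 1/2) * log (2*ν - 1)

lemma ellCore_le {m ν : ℝ} (hm : 1/2 < m) (hν : 1/2 < ν) :
    ellCore (log ((2*m - 1)/m)) ν ≤ 1/2 * log (2*m - 1) := by
  have hm0 : 0 < m := by linarith
  have hν0 : 0 < ν := by linarith
  have hm1 : 0 < 2*m - 1 := by linarith
  have hν1 : 0 < 2*ν - 1 := by linarith
  have hratio := log_le_sub_one_of_pos (show 0 < (2*m - 1)*ν/((2*ν - 1)*m) by positivity)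
  have hquot := log_le_sub_one_of_pos (show 0 < ν/m by positivity)
  rw [log_div (by positivity) (by positivity), log_mul hm1.ne' hν0.ne',
    log_mul hν1.ne' hm0.ne'] at hratio
  rw [log_div hν0.ne' hm0.ne'] at hquot
  have hcancel : (2*ν - 1) * ((2*m - 1)*ν/((2*ν - 1)*m) - 1) + (ν/m - 1) = 0 := by
    field_simp; ring
  have hweighted := mul_le_mul_of_nonneg_left hratio hν1.le
  rw [ellCore, log_div hm1.ne' hm0.ne']
  linear_combination (hweighted + hquot + hcancel) / 2

lemma ellCore_self {m : ℝ} (hm : 1/2 < m) :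
    ellCore (log ((2*m - 1)/m)) m = 1/2 * log (2*m - 1) := by
  rw [ellCore, log_div (by linarith) (by linarith)]
  ring

lemma ell_eq_ellCore {ρ Δ ν : ℝ} (α : ℝ) (hρ : ρ ∈ Ioo (-1 : ℝ) 1) (hΔ : 0 < Δ) (hν : 1/2 < ν) :
    ell ρ Δ α ν = 1/2 * log ((1 + ρ)/(1 - ρ)) + ellCore (log ((1 - ρ)/(Δ * exp α))) ν := by
  obtain ⟨hρl, hρr⟩ := hρ
  have hC : 0 < 2*π*exp 1 := by positivity
  have hminus : 0 < 1 - ρ := by linarith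
  have hplus : 0 < 1 + ρ := by linarith
  have h2ν : 0 < 2*ν - 1 := by linarith
  have hν0 : 0 < ν := by linarith
  have hK : log ((2*π*exp 1)^2 * (1 - ρ^2))
      = 2 * log (2*π*exp 1) + log (1 - ρ) + log (1 + ρ) := by
    rw [show (2*π*exp 1)^2 * (1 - ρ^2) = (2*π*exp 1)^2 * ((1 - ρ) * (1 + ρ)) by ring,
      log_mul (by positivity) (by positivity), log_mul hminus.ne' hplus.ne', log_pow]
    push_cast; ring
  have hν2 : log (ν^2/(2*ν - 1)) = 2 * log ν - log (2*ν - 1) := by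
    rw [log_div (by positivity) h2ν.ne', log_pow]; push_cast; ring
  have hρ2 : log ((2*π*exp 1)^2 * (1 - ρ)^2/(2*ν - 1))
      = 2 * log (2*π*exp 1) + 2 * log (1 - ρ) - log (2*ν - 1) := by
    rw [log_div (by positivity) h2ν.ne', log_mul (by positivity) (by positivity), log_pow,
      log_pow]
    push_cast; ring
  rw [ell, ellCore, hK, hν2, hρ2, log_mul hC.ne' hΔ.ne', log_div hplus.ne' hminus.ne',
    log_div hminus.ne' (by positivity), log_mul hΔ.ne' (exp_pos α).ne', log_exp]
  ring

theorem stmt_3_general (ρ Δ α : ℝ) (hρ : ρ ∈ Set.Ioo (0:ℝ) 1) (hΔ : 0 < Δ)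
    (h1 : 1 - ρ ≤ Δ * Real.exp α) :
    (∀ ν ∈ Set.Icc (1/(1+ρ)) 1,
      ell ρ Δ α ν ≤ ell ρ Δ α (Δ * Real.exp α / (2*Δ*Real.exp α - 1 + ρ))) ∧
    ell ρ Δ α (Δ * Real.exp α / (2*Δ*Real.exp α - 1 + ρ))
      = (1/2) * Real.log ((1+ρ)/(2*Δ*Real.exp α + ρ - 1)) := by
  obtain ⟨hρ0, hρ1⟩ := hρ
  have hρ' : ρ ∈ Ioo (-1 : ℝ) 1 := ⟨by linarith, hρ1⟩
  have ht : 0 < Δ * exp α := by positivity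
  have hs : 0 < 2*Δ*exp α - 1 + ρ := by linarith
  generalize hm_def : Δ * exp α / (2*Δ*exp α - 1 + ρ) = m
  have hm1 : 2*m - 1 = (1 - ρ)/(2*Δ*exp α - 1 + ρ) := by rw [← hm_def]; field_simp; ring
  have hm : 1/2 < m := by linarith [show 0 < 2*m - 1 by rw [hm1]; exact div_pos (by linarith) hs]
  have hc : (1 - ρ)/(Δ * exp α) = (2*m - 1)/m := by
    rw [hm1, ← hm_def]
    field_simp
    exact (div_self (by linarith)).symm
  have hm_max : ell ρ Δ α m = 1/2 * log ((1 + ρ)/(1 - ρ)) + 1/2 * log (2*m - 1) := by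
    rw [ell_eq_ellCore α hρ' hΔ hm, hc, ellCore_self hm]
  refine ⟨fun ν hν => ?_, ?_⟩
  · have hν : 1/2 < ν := lt_of_lt_of_le
      (by rw [div_lt_div_iff₀ (by norm_num) (by linarith)]; linarith) hν.1
    rw [ell_eq_ellCore α hρ' hΔ hν, hm_max, hc]
    linarith [ellCore_le hm hν]
  · rw [hm_max, hm1, ← mul_add, ← log_mul (by positivity) (div_pos (by linarith) hs).ne']
    rw [show 2*Δ*exp α + ρ - 1 = 2*Δ*exp α - 1 + ρ by ring]
    field_simp

theorem stmt_3 (ρ Δ α : ℝ) (hρ : ρ ∈ Set.Ioo (0:ℝ) 1) (hΔ : 0 < Δ) (hα : 0 ≤ α)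
    (h1 : 1 - ρ ≤ Δ * Real.exp α) (h2 : Δ * Real.exp α ≤ 1) :
    (∀ ν ∈ Set.Icc (1/(1+ρ)) 1,
      ell ρ Δ α ν ≤ ell ρ Δ α (Δ * Real.exp α / (2*Δ*Real.exp α - 1 + ρ))) ∧
    ell ρ Δ α (Δ * Real.exp α / (2*Δ*Real.exp α - 1 + ρ))
      = (1/2) * Real.log ((1+ρ)/(2*Δ*Real.exp α + ρ - 1)) :=
  stmt_3_general ρ Δ α hρ hΔ h1
end

section
/- Suppose Δ·e^α ≤ 1−ρ with ρ ∈ (0,1), Δ > 0, α ≥ 0. Then ℓ is nondecreasing on [1/(1+ρ), 1], and its maximum over this interval is attained at ν = 1 with value ℓ(1) = (1/2)·log((1−ρ²)/(Δ²e^{2α})). -/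
open Real Set

open Filter Topology

/- On `ν > 1/2` the logarithms split and `ℓ` becomes an affine function plus
`ν log ν - (2ν - 1) log (2ν - 1) / 2`, so that
`ℓ'(ν) = log ((1 - ρ) / (Δ e^α)) + log (ν / (2ν - 1))`.
The hypothesis `Δ e^α ≤ 1 - ρ` makes the first term nonnegative, and `ν ≤ 1` gives
`2ν - 1 ≤ ν`, which makes the second one nonnegative. -/

lemma ell_eq_of_half_lt {ρ Δ α ν : ℝ} (hρ : ρ ≠ 1) (hν : 1/2 < ν) :
    ell ρ Δ α ν = (1/2) * log ((2*π*exp 1)^2 * (1 - ρ^2))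
      - (1 - ν) * log (2*π*exp 1*(1 - ρ)) - ν * (α + log (2*π*exp 1*Δ))
      + ν * log ν - (2*ν - 1) * log (2*ν - 1) / 2 := by
  have hν0 : ν ≠ 0 := by linarith
  have h2 : 2*ν - 1 ≠ 0 := by linarith
  have hρ' : 1 - ρ ≠ 0 := sub_ne_zero.2 hρ.symm
  have hc : 2*π*exp 1 ≠ 0 := by positivity
  have l1 : log (ν^2/(2*ν - 1)) = 2 * log ν - log (2*ν - 1) := by
    rw [log_div (by positivity) h2, log_pow]; push_cast; ring
  have l2 : log ((2*π*exp 1)^2 * (1 - ρ)^2/(2*ν - 1))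
      = 2 * log (2*π*exp 1*(1 - ρ)) - log (2*ν - 1) := by
    rw [← mul_pow, log_div (by simp [hc, hρ']) h2, log_pow]; push_cast; ring
  rw [ell, l1, l2]
  ring

lemma hasDerivAt_ell {ρ Δ α ν : ℝ} (hρ : ρ ≠ 1) (hν : 1/2 < ν) :
    HasDerivAt (ell ρ Δ α)
      (log (2*π*exp 1*(1 - ρ)) - (α + log (2*π*exp 1*Δ)) + (log ν - log (2*ν - 1))) ν := by
  have hν0 : ν ≠ 0 := by linarith
  have h2 : 2*ν - 1 ≠ 0 := by linarith
  have hlin : HasDerivAt (fun ν : ℝ => 2*ν - 1) 2 ν := by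
    simpa using ((hasDerivAt_id ν).const_mul 2).sub_const 1
  have hent : HasDerivAt (fun ν : ℝ => (2*ν - 1) * log (2*ν - 1) / 2)
      ((log (2*ν - 1) + 1) * 2 / 2) ν := by
    have := ((hasDerivAt_mul_log h2).comp ν hlin).div_const 2
    exact this
  have hexp : HasDerivAt (fun ν => (1/2) * log ((2*π*exp 1)^2 * (1 - ρ^2))
      - (1 - ν) * log (2*π*exp 1*(1 - ρ)) - ν * (α + log (2*π*exp 1*Δ))
      + ν * log ν - (2*ν - 1) * log (2*ν - 1) / 2)
      (0 - (0 - 1) * log (2*π*exp 1*(1 - ρ)) - 1 * (α + log (2*π*exp 1*Δ)) + (log ν + 1)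
        - (log (2*ν - 1) + 1) * 2 / 2) ν := by
    have := ((((hasDerivAt_const ν ((1/2) * log ((2*π*exp 1)^2 * (1 - ρ^2)))).sub
      (((hasDerivAt_const ν 1).sub (hasDerivAt_id ν)).mul_const
        (log (2*π*exp 1*(1 - ρ))))).sub
      ((hasDerivAt_id ν).mul_const (α + log (2*π*exp 1*Δ)))).add
      (hasDerivAt_mul_log hν0)).sub hent
    exact this
  exact (hexp.congr_of_eventuallyEq (eventually_of_mem (Ioi_mem_nhds hν)
    fun _ hx => ell_eq_of_half_lt hρ hx)).congr_deriv (by ring)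

theorem ell_monotoneOn {ρ Δ α : ℝ} (hΔ : 0 < Δ) (h : Δ * exp α ≤ 1 - ρ) :
    MonotoneOn (ell ρ Δ α) (Ioc (1/2) 1) := by
  have hρ : ρ < 1 := by nlinarith [exp_pos α]
  have hderiv : ∀ ν ∈ Ioc (1/2 : ℝ) 1, HasDerivAt (ell ρ Δ α)
      (log (2*π*exp 1*(1 - ρ)) - (α + log (2*π*exp 1*Δ)) + (log ν - log (2*ν - 1))) ν :=
    fun ν hν => hasDerivAt_ell hρ.ne hν.1
  refine monotoneOn_of_hasDerivWithinAt_nonneg (convex_Ioc _ _)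
    (fun ν hν => (hderiv ν hν).continuousAt.continuousWithinAt)
    (fun ν hν =>
      (hderiv ν (Ioo_subset_Ioc_self (by rwa [interior_Ioc] at hν))).hasDerivWithinAt) ?_
  rintro ν hν
  rw [interior_Ioc] at hν
  have hrate : α + log (2*π*exp 1*Δ) ≤ log (2*π*exp 1*(1 - ρ)) := by
    calc α + log (2*π*exp 1*Δ) = log (2*π*exp 1*(Δ * exp α)) := by
          rw [← mul_assoc, log_mul (by positivity) (exp_ne_zero α), log_exp, add_comm]
      _ ≤ log (2*π*exp 1*(1 - ρ)) := log_le_log (by positivity) (by gcongr)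
  have hratio : log (2*ν - 1) ≤ log ν := log_le_log (by linarith [hν.1]) (by linarith [hν.2])
  linarith

lemma ell_one {ρ Δ α : ℝ} (hρ : 1 - ρ^2 ≠ 0) (hΔ : Δ ≠ 0) :
    ell ρ Δ α 1 = (1/2) * log ((1 - ρ^2)/(Δ^2 * exp (2*α))) := by
  have hc : 2*π*exp 1 ≠ 0 := by positivity
  rw [log_div hρ (by positivity), log_mul (by positivity) (exp_ne_zero _), log_pow, log_exp]
  norm_num [ell, log_mul (pow_ne_zero 2 hc) hρ, log_mul hc hΔ, log_pow]
  ring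

theorem stmt_4_general (ρ Δ α : ℝ) (hρ : ρ ∈ Set.Ioo (0:ℝ) 1) (hΔ : 0 < Δ)
    (h : Δ * Real.exp α ≤ 1 - ρ) :
    MonotoneOn (ell ρ Δ α) (Set.Icc (1/(1+ρ)) 1) ∧
    (∀ ν ∈ Set.Icc (1/(1+ρ)) 1, ell ρ Δ α ν ≤ ell ρ Δ α 1) ∧
    ell ρ Δ α 1 = (1/2) * Real.log ((1 - ρ^2)/(Δ^2 * Real.exp (2*α))) := by
  obtain ⟨hρ0, hρ1⟩ := hρ
  have hle : 1/(1+ρ) ≤ 1 := by rw [div_le_one (by linarith)]; linarith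
  have hsub : Icc (1/(1+ρ)) 1 ⊆ Ioc (1/2) 1 := by
    refine Icc_subset_Ioc_iff hle |>.2 ⟨?_, le_rfl⟩
    rw [div_lt_div_iff₀ (by norm_num) (by linarith)]; linarith
  have hmono := (ell_monotoneOn hΔ h).mono hsub
  refine ⟨hmono, fun ν hν => hmono hν (right_mem_Icc.2 hle) hν.2, ell_one ?_ hΔ.ne'⟩
  nlinarith

theorem stmt_4 (ρ Δ α : ℝ) (hρ : ρ ∈ Set.Ioo (0:ℝ) 1) (hΔ : 0 < Δ) (hα : 0 ≤ α)
    (h : Δ * Real.exp α ≤ 1 - ρ) :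
    MonotoneOn (ell ρ Δ α) (Set.Icc (1/(1+ρ)) 1) ∧
    (∀ ν ∈ Set.Icc (1/(1+ρ)) 1, ell ρ Δ α ν ≤ ell ρ Δ α 1) ∧
    ell ρ Δ α 1 = (1/2) * Real.log ((1 - ρ^2)/(Δ^2 * Real.exp (2*α))) :=
  stmt_4_general ρ Δ α hρ hΔ h
end
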